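/- Let V ≥ 0 with e^{2V} − 1 ≤ 1/2, μ > 0, D ≥ 0, and let m : ℝ³ → ℝ³ be a Lebesgue measure-preserving bijection such that for all y: e^{-V}|y| ≤ |m(±y)| ≤ e^{V}|y| and | |m(−y)| − |m(y)| | ≤ D min(1, μ|y|)|y|. Let f : ℝ³ → ℝ be a C² function with bounded first and second derivatives, and let x ∈ ℝ³. For ε > 0 set g_ε = ∫_{{y : |y| ≥ ε, |m(−y)| < ε}} K₀(y)(f(x−y) − f(x)) dy. Then there exists a constant C, depending only on F, V, D, μ, ‖∇f‖_{L^∞} and ‖∇²f‖_{L^∞}, such that |g_ε| ≤ C ε for all 0 < ε ≤ 1; in particular g_ε → 0 as ε → 0⁺, uniformly in x. -/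

import Mathlib

open MeasureTheory Filter
open scoped Real Topology

noncomputable section

/-- `|x|_{1/F}² = x₁² + x₂² + x₃²/F²`. -/
def normInvFsq (F : ℝ) (x : EuclideanSpace ℝ (Fin 3)) : ℝ :=
  x 0 ^ 2 + x 1 ^ 2 + x 2 ^ 2 / F ^ 2

/-- The kernel `K₀(y) = −(2/F²)(y₁² + y₂² − 3y₃²/F²)/|y|_{1/F}⁶`. -/
def K₀ (F : ℝ) (y : EuclideanSpace ℝ (Fin 3)) : ℝ :=
  -(2 / F ^ 2) * (y 0 ^ 2 + y 1 ^ 2 - 3 * y 2 ^ 2 / F ^ 2) / (normInvFsq F y) ^ 3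

/-!
Let `A = {y : ε ≤ |y|, |m(−y)| < ε}`. The lower bound on `|m(−y)|` puts `A` in the annulus
`ε ≤ |y| < e^V ε`, where `|K₀| ≤ 6 F⁻² ε⁻⁴`. Since `y ↦ −y` preserves volume and `K₀` is even,
`2 g_ε = ∫_{A ∩ −A} K₀(y) (f(x−y) + f(x+y) − 2 f(x)) dy + 2 ∫_{A \ −A} K₀(y) (f(x−y) − f(x)) dy`.
The first integrand is `O(ε⁻⁴ ε²)` on a set of volume `O(ε³)`. On `A \ −A` we have
`ε ≤ |m(y)| ≤ |m(−y)| + Dμ|y|² < ε + Dμ e^{2V} ε²`, so `m` maps `A \ −A` into a shell of volume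
`O(ε⁴)`; as `m` preserves volume, the second integral is `O(ε⁻⁴ ε ε⁴)`. Both terms are `O(ε)`.
-/

open Metric Module Set

section Symmetrization

variable {G E : Type*} [AddGroup G] [MeasurableSpace G] [MeasurableNeg G] {μ : Measure G}
  [μ.IsNegInvariant] [NormedAddCommGroup E] [NormedSpace ℝ E]

theorem setIntegral_comp_neg (φ : G → E) (s : Set G) :
    ∫ y in -s, φ (-y) ∂μ = ∫ y in s, φ y ∂μ :=
  (Measure.measurePreserving_neg μ).setIntegral_preimage_emb
    (MeasurableEquiv.neg G).measurableEmbedding φ s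

theorem two_mul_norm_setIntegral_le {φ : G → E} {A : Set G} {M₁ M₂ : ℝ} (hA : MeasurableSet A)
    (hAfin : μ A < ⊤) (hφ : IntegrableOn φ A μ) (h₁ : ∀ y ∈ A, ‖φ y‖ ≤ M₁)
    (h₂ : ∀ y ∈ A ∩ -A, ‖φ y + φ (-y)‖ ≤ M₂) :
    2 * ‖∫ y in A, φ y ∂μ‖ ≤ M₂ * μ.real (A ∩ -A) + 2 * (M₁ * μ.real (A \ -A)) := by
  set S := A ∩ -A
  have hS : -S = S := by simp [S, Set.inter_comm]
  have hφS : IntegrableOn φ S μ := hφ.mono_set inter_subset_left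
  have hφS' : IntegrableOn (fun y ↦ φ (-y)) S μ := by
    rw [← hS]
    exact ((Measure.measurePreserving_neg μ).integrableOn_comp_preimage
      (MeasurableEquiv.neg G).measurableEmbedding).2 hφS
  have hsym : ∫ y in S, φ (-y) ∂μ = ∫ y in S, φ y ∂μ := by
    conv_lhs => rw [← hS]
    exact setIntegral_comp_neg φ S
  have hsplit : (2 : ℝ) • ∫ y in A, φ y ∂μ
      = ∫ y in S, (φ y + φ (-y)) ∂μ + (2 : ℝ) • ∫ y in A \ -A, φ y ∂μ := by
    rw [← integral_inter_add_sdiff hA.neg hφ, integral_add hφS hφS', hsym]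
    module
  calc 2 * ‖∫ y in A, φ y ∂μ‖ = ‖(2 : ℝ) • ∫ y in A, φ y ∂μ‖ := by
        rw [norm_smul, Real.norm_two]
    _ ≤ ‖∫ y in S, (φ y + φ (-y)) ∂μ‖ + 2 * ‖∫ y in A \ -A, φ y ∂μ‖ := by
        rw [hsplit, ← norm_smul_of_nonneg zero_le_two]
        exact norm_add_le _ _
    _ ≤ M₂ * μ.real S + 2 * (M₁ * μ.real (A \ -A)) := by
        gcongr
        · exact norm_setIntegral_le_of_norm_le_const
            ((measure_mono inter_subset_left).trans_lt hAfin) h₂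
        · exact norm_setIntegral_le_of_norm_le_const
            ((measure_mono sdiff_subset).trans_lt hAfin) fun y hy ↦ h₁ y hy.1

end Symmetrization

section SecondOrder

variable {E G : Type*} [NormedAddCommGroup E] [NormedSpace ℝ E] [NormedAddCommGroup G]
  [NormedSpace ℝ G] {f : E → G} {B : ℝ}

theorem norm_fderiv_sub_fderiv_le (hf : ContDiff ℝ 2 f)
    (hB : ∀ z, ‖iteratedFDeriv ℝ 2 f z‖ ≤ B) (a b : E) :
    ‖fderiv ℝ f a - fderiv ℝ f b‖ ≤ B * ‖a - b‖ := by
  have hB' : ∀ z, ‖fderiv ℝ (fderiv ℝ f) z‖ ≤ B := fun z ↦ by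
    rw [← norm_iteratedFDeriv_one, norm_iteratedFDeriv_fderiv]
    exact hB z
  exact convex_univ.norm_image_sub_le_of_norm_fderiv_le
    (fun z _ ↦ ((hf.fderiv_right (m := 1) le_rfl).differentiable one_ne_zero).differentiableAt)
    (fun z _ ↦ hB' z) (mem_univ b) (mem_univ a)

theorem norm_sub_sub_fderiv_le (hf : ContDiff ℝ 2 f)
    (hB : ∀ z, ‖iteratedFDeriv ℝ 2 f z‖ ≤ B) (x v : E) :
    ‖f (x + v) - f x - fderiv ℝ f x v‖ ≤ B * ‖v‖ ^ 2 := by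
  have hB₀ : 0 ≤ B := (norm_nonneg _).trans (hB x)
  have := (convex_closedBall x ‖v‖).norm_image_sub_le_of_norm_fderiv_le'
    (fun z _ ↦ (hf.differentiable two_ne_zero).differentiableAt)
    (fun z hz ↦ (norm_fderiv_sub_fderiv_le hf hB z x).trans
      (mul_le_mul_of_nonneg_left (mem_closedBall_iff_norm.1 hz) hB₀))
    (mem_closedBall_self (norm_nonneg v)) (by simp : x + v ∈ closedBall x ‖v‖)
  simpa [sq, mul_assoc] using this

theorem norm_second_difference_le (hf : ContDiff ℝ 2 f)
    (hB : ∀ z, ‖iteratedFDeriv ℝ 2 f z‖ ≤ B) (x y : E) :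
    ‖(f (x - y) - f x) + (f (x + y) - f x)‖ ≤ 2 * B * ‖y‖ ^ 2 := by
  have h₁ := norm_sub_sub_fderiv_le hf hB x y
  have h₂ := norm_sub_sub_fderiv_le hf hB x (-y)
  rw [map_neg, norm_neg, ← sub_eq_add_neg] at h₂
  calc ‖(f (x - y) - f x) + (f (x + y) - f x)‖
      = ‖(f (x - y) - f x - -fderiv ℝ f x y) + (f (x + y) - f x - fderiv ℝ f x y)‖ := by
        congr 1; abel
    _ ≤ ‖f (x - y) - f x - -fderiv ℝ f x y‖ + ‖f (x + y) - f x - fderiv ℝ f x y‖ :=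
        norm_add_le _ _
    _ ≤ 2 * B * ‖y‖ ^ 2 := by linarith

end SecondOrder

section Annulus

variable {E : Type*} [NormedAddCommGroup E] [NormedSpace ℝ E] [MeasurableSpace E] [BorelSpace E]
  [FiniteDimensional ℝ E] [Nontrivial E] (μ : Measure E) [μ.IsAddHaarMeasure]

theorem addHaar_real_ball (x : E) {r : ℝ} (hr : 0 ≤ r) :
    μ.real (ball x r) = r ^ finrank ℝ E * μ.real (ball 0 1) := by
  rw [← Measure.addHaar_real_closedBall_eq_addHaar_real_ball,
    Measure.addHaar_real_closedBall μ x hr]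

theorem addHaar_real_annulus {r R : ℝ} (hr : 0 ≤ r) (hrR : r ≤ R) :
    μ.real {z : E | r ≤ ‖z‖ ∧ ‖z‖ < R}
      = (R ^ finrank ℝ E - r ^ finrank ℝ E) * μ.real (ball 0 1) := by
  have h : {z : E | r ≤ ‖z‖ ∧ ‖z‖ < R} = ball 0 R \ ball 0 r := by
    ext z; simp [and_comm]
  rw [h, measureReal_sdiff (ball_subset_ball hrR) measurableSet_ball,
    addHaar_real_ball μ 0 hr, addHaar_real_ball μ 0 (hr.trans hrR)]
  ring

end Annulus

theorem pow_three_add_mul_sq_sub_pow_three_le {ε K : ℝ} (hε₀ : 0 ≤ ε) (hε₁ : ε ≤ 1) (hK : 0 ≤ K) :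
    (ε + K * ε ^ 2) ^ 3 - ε ^ 3 ≤ 3 * K * (1 + K) ^ 2 * ε ^ 4 := by
  have h₅ : ε ^ 5 ≤ ε ^ 4 := pow_le_pow_of_le_one hε₀ hε₁ (by norm_num)
  have h₆ : ε ^ 6 ≤ ε ^ 4 := pow_le_pow_of_le_one hε₀ hε₁ (by norm_num)
  nlinarith [mul_le_mul_of_nonneg_left h₅ (sq_nonneg K),
    mul_le_mul_of_nonneg_left h₆ (pow_nonneg hK 3), pow_nonneg hε₀ 4, pow_nonneg hK 3, sq_nonneg K]

local notation "E3" => EuclideanSpace ℝ (Fin 3)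

theorem K₀_neg (F : ℝ) (y : E3) : K₀ F (-y) = K₀ F y := by
  simp [K₀, normInvFsq]

theorem measurable_K₀ (F : ℝ) : Measurable (K₀ F) := by
  have h : ∀ i : Fin 3, Measurable fun y : E3 ↦ y i := fun i ↦
    (measurable_pi_apply i).comp (WithLp.measurable_ofLp _ _)
  unfold K₀ normInvFsq
  fun_prop

theorem norm_sq_le_normInvFsq {F : ℝ} (hF : F ∈ Ioc (0 : ℝ) 1) (y : E3) :
    ‖y‖ ^ 2 ≤ normInvFsq F y := by
  have hy : ‖y‖ ^ 2 = y 0 ^ 2 + y 1 ^ 2 + y 2 ^ 2 := by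
    simp [EuclideanSpace.norm_sq_eq, Fin.sum_univ_three]
  have : y 2 ^ 2 ≤ y 2 ^ 2 / F ^ 2 :=
    le_div_self (sq_nonneg _) (by positivity [hF.1]) (pow_le_one₀ hF.1.le hF.2)
  rw [hy, normInvFsq]
  linarith

theorem abs_K₀_le {F : ℝ} (hF : F ∈ Ioc (0 : ℝ) 1) (y : E3) :
    |K₀ F y| ≤ 6 / F ^ 2 / ‖y‖ ^ 4 := by
  obtain rfl | hy := eq_or_ne y 0
  · simp [K₀, normInvFsq]
  have hF₀ := hF.1
  set Q := normInvFsq F y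
  have hQ : ‖y‖ ^ 2 ≤ Q := norm_sq_le_normInvFsq hF y
  have hQ₀ : 0 < Q := (by positivity : (0 : ℝ) < ‖y‖ ^ 2).trans_le hQ
  have hnum : |y 0 ^ 2 + y 1 ^ 2 - 3 * y 2 ^ 2 / F ^ 2| ≤ 3 * Q := by
    have hQdef : Q = y 0 ^ 2 + y 1 ^ 2 + y 2 ^ 2 / F ^ 2 := rfl
    have : 0 ≤ y 2 ^ 2 / F ^ 2 := by positivity
    rw [abs_le, mul_div_assoc, hQdef]
    constructor <;> nlinarith [sq_nonneg (y 0), sq_nonneg (y 1)]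
  calc |K₀ F y| = 2 / F ^ 2 * |y 0 ^ 2 + y 1 ^ 2 - 3 * y 2 ^ 2 / F ^ 2| / Q ^ 3 := by
        rw [K₀, abs_div, abs_mul, abs_neg, abs_of_pos (by positivity : (0 : ℝ) < 2 / F ^ 2),
          abs_of_pos (pow_pos hQ₀ 3)]
    _ ≤ 2 / F ^ 2 * (3 * Q) / Q ^ 3 := by gcongr
    _ = 6 / F ^ 2 / Q ^ 2 := by field_simp; ring
    _ ≤ 6 / F ^ 2 / ‖y‖ ^ 4 := by
        gcongr
        nlinarith [pow_le_pow_left₀ (by positivity) hQ 2]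

theorem abs_K₀_le_of_le_norm {F ε : ℝ} (hF : F ∈ Ioc (0 : ℝ) 1) {y : E3} (hε : 0 < ε)
    (hεy : ε ≤ ‖y‖) : |K₀ F y| ≤ 6 / F ^ 2 / ε ^ 4 :=
  (abs_K₀_le hF y).trans (by gcongr)

theorem measurable_K₀_mul_sub {F : ℝ} {f : E3 → ℝ} (hf : Continuous f) (x : E3) :
    Measurable fun y ↦ K₀ F y * (f (x - y) - f x) :=
  (measurable_K₀ F).mul ((hf.comp (continuous_sub_left x)).sub continuous_const).measurable

theorem abs_K₀_mul_sub_le {F ε R B₁ : ℝ} {f : E3 → ℝ} (hF : F ∈ Ioc (0 : ℝ) 1)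
    (hf : Differentiable ℝ f) (hB₁ : ∀ z, ‖fderiv ℝ f z‖ ≤ B₁) (x : E3) {y : E3} (hε : 0 < ε)
    (hεy : ε ≤ ‖y‖) (hyR : ‖y‖ ≤ R) :
    |K₀ F y * (f (x - y) - f x)| ≤ 6 / F ^ 2 / ε ^ 4 * (B₁ * R) := by
  have hK := abs_K₀_le_of_le_norm hF hε hεy
  have hlip := convex_univ.norm_image_sub_le_of_norm_fderiv_le (fun z _ ↦ hf z)
    (fun z _ ↦ hB₁ z) (mem_univ x) (mem_univ (x - y))
  rw [Real.norm_eq_abs, sub_sub_cancel_left, norm_neg] at hlip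
  rw [abs_mul]
  have hB₁₀ : 0 ≤ B₁ := (norm_nonneg _).trans (hB₁ x)
  exact mul_le_mul hK (hlip.trans (by gcongr)) (abs_nonneg _) (by positivity)

theorem abs_K₀_mul_second_difference_le {F ε R B₂ : ℝ} {f : E3 → ℝ} (hF : F ∈ Ioc (0 : ℝ) 1)
    (hf : ContDiff ℝ 2 f) (hB₂ : ∀ z, ‖iteratedFDeriv ℝ 2 f z‖ ≤ B₂) (x : E3) {y : E3}
    (hε : 0 < ε) (hεy : ε ≤ ‖y‖) (hyR : ‖y‖ ≤ R) :
    |K₀ F y * (f (x - y) - f x) + K₀ F (-y) * (f (x - -y) - f x)|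
      ≤ 6 / F ^ 2 / ε ^ 4 * (2 * B₂ * R ^ 2) := by
  have hK := abs_K₀_le_of_le_norm hF hε hεy
  have hB₂₀ : 0 ≤ B₂ := (norm_nonneg _).trans (hB₂ x)
  have hsd := norm_second_difference_le hf hB₂ x y
  rw [Real.norm_eq_abs] at hsd
  rw [K₀_neg, sub_neg_eq_add, ← mul_add, abs_mul]
  exact mul_le_mul hK (hsd.trans (by gcongr)) (abs_nonneg _) (by positivity)

def discrepancySet (m : E3 → E3) (ε : ℝ) : Set E3 := {y | ε ≤ ‖y‖ ∧ ‖m (-y)‖ < ε}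

section DiscrepancySet

variable {V D μ ε : ℝ} {m : E3 → E3}

theorem measurableSet_discrepancySet (hm : Measurable m) : MeasurableSet (discrepancySet m ε) :=
  (measurableSet_le measurable_const measurable_norm).inter
    (measurableSet_lt (hm.comp measurable_neg).norm measurable_const)

theorem discrepancySet_subset_ball (hmV : ∀ y, Real.exp (-V) * ‖y‖ ≤ ‖m (-y)‖) :
    discrepancySet m ε ⊆ ball 0 (Real.exp V * ε) := fun y hy ↦ by
  have := (hmV y).trans_lt hy.2
  rwa [Real.exp_neg, inv_mul_lt_iff₀ (Real.exp_pos V), ← mem_ball_zero_iff] at this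

theorem measureReal_discrepancySet_le (hmV : ∀ y, Real.exp (-V) * ‖y‖ ≤ ‖m (-y)‖)
    (hε : 0 ≤ ε) :
    volume.real (discrepancySet m ε) ≤ (Real.exp V * ε) ^ 3 * volume.real (ball (0 : E3) 1) :=
  calc volume.real (discrepancySet m ε) ≤ volume.real (ball (0 : E3) (Real.exp V * ε)) :=
        measureReal_mono (discrepancySet_subset_ball hmV)
    _ = (Real.exp V * ε) ^ 3 * volume.real (ball (0 : E3) 1) := by
        rw [addHaar_real_ball volume 0 (by positivity), finrank_euclideanSpace_fin]

theorem discrepancySet_sdiff_neg_subset (hμ : 0 ≤ μ) (hD : 0 ≤ D)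
    (hmV : ∀ y, Real.exp (-V) * ‖y‖ ≤ ‖m (-y)‖)
    (hmD : ∀ y, |‖m (-y)‖ - ‖m y‖| ≤ D * min 1 (μ * ‖y‖) * ‖y‖) :
    discrepancySet m ε \ -discrepancySet m ε
      ⊆ m ⁻¹' {z | ε ≤ ‖z‖ ∧ ‖z‖ < ε + D * μ * Real.exp V ^ 2 * ε ^ 2} := by
  rintro y ⟨hyA, hyA'⟩
  simp only [discrepancySet, Set.mem_neg, mem_ofPred_eq, norm_neg, neg_neg, not_and, not_lt] at hyA'
  have hy := mem_ball_zero_iff.1 (discrepancySet_subset_ball hmV hyA)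
  have hdefect : D * min 1 (μ * ‖y‖) * ‖y‖ ≤ D * μ * Real.exp V ^ 2 * ε ^ 2 :=
    calc D * min 1 (μ * ‖y‖) * ‖y‖ ≤ D * (μ * ‖y‖) * ‖y‖ := by gcongr; exact min_le_right _ _
      _ = D * μ * ‖y‖ ^ 2 := by ring
      _ ≤ D * μ * (Real.exp V * ε) ^ 2 := by gcongr
      _ = D * μ * Real.exp V ^ 2 * ε ^ 2 := by ring
  exact ⟨hyA' hyA.1, by linarith [(abs_le.1 (hmD y)).1, hyA.2]⟩

theorem measureReal_discrepancySet_sdiff_neg_le (hμ : 0 ≤ μ) (hD : 0 ≤ D)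
    (hm : MeasurePreserving m volume volume) (hmV : ∀ y, Real.exp (-V) * ‖y‖ ≤ ‖m (-y)‖)
    (hmD : ∀ y, |‖m (-y)‖ - ‖m y‖| ≤ D * min 1 (μ * ‖y‖) * ‖y‖) (hε : ε ∈ Ioc (0 : ℝ) 1) :
    volume.real (discrepancySet m ε \ -discrepancySet m ε)
      ≤ 3 * (D * μ * Real.exp V ^ 2) * (1 + D * μ * Real.exp V ^ 2) ^ 2 * ε ^ 4
        * volume.real (ball (0 : E3) 1) := by
  set K := D * μ * Real.exp V ^ 2
  have hK : 0 ≤ K := by positivity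
  set S := {z : E3 | ε ≤ ‖z‖ ∧ ‖z‖ < ε + K * ε ^ 2}
  have hS : MeasurableSet S :=
    (measurableSet_le measurable_const measurable_norm).inter
      (measurableSet_lt measurable_norm measurable_const)
  have hSfin : volume (m ⁻¹' S) ≠ ⊤ := by
    rw [hm.measure_preimage hS.nullMeasurableSet]
    exact ((measure_mono fun z hz ↦ mem_ball_zero_iff.2 hz.2).trans_lt
      (measure_ball_lt_top (x := (0 : E3)) (r := ε + K * ε ^ 2))).ne
  calc volume.real (discrepancySet m ε \ -discrepancySet m ε) ≤ volume.real (m ⁻¹' S) :=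
        measureReal_mono (discrepancySet_sdiff_neg_subset hμ hD hmV hmD) hSfin
    _ = ((ε + K * ε ^ 2) ^ 3 - ε ^ 3) * volume.real (ball (0 : E3) 1) := by
        rw [hm.measureReal_preimage hS.nullMeasurableSet,
          addHaar_real_annulus volume hε.1.le (by simp; positivity), finrank_euclideanSpace_fin]
    _ ≤ 3 * K * (1 + K) ^ 2 * ε ^ 4 * volume.real (ball (0 : E3) 1) := by
        gcongr
        exact pow_three_add_mul_sq_sub_pow_three_le hε.1.le hε.2 hK

end DiscrepancySet

def discrepancyConst (F V μ D B₁ B₂ : ℝ) : ℝ :=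
  6 * volume.real (ball (0 : E3) 1) / F ^ 2 * (B₂ * Real.exp V ^ 5
    + 3 * B₁ * Real.exp V * (D * μ * Real.exp V ^ 2) * (1 + D * μ * Real.exp V ^ 2) ^ 2)

theorem abs_setIntegral_discrepancySet_le {F V μ D B₁ B₂ ε : ℝ} {m : E3 → E3} {f : E3 → ℝ}
    (hF : F ∈ Ioc (0 : ℝ) 1) (hμ : 0 ≤ μ) (hD : 0 ≤ D) (hm : MeasurePreserving m volume volume)
    (hmV : ∀ y, Real.exp (-V) * ‖y‖ ≤ ‖m (-y)‖)
    (hmD : ∀ y, |‖m (-y)‖ - ‖m y‖| ≤ D * min 1 (μ * ‖y‖) * ‖y‖) (hf : ContDiff ℝ 2 f)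
    (hB₁ : ∀ z, ‖fderiv ℝ f z‖ ≤ B₁) (hB₂ : ∀ z, ‖iteratedFDeriv ℝ 2 f z‖ ≤ B₂) (x : E3)
    (hε : ε ∈ Ioc (0 : ℝ) 1) :
    |∫ y in discrepancySet m ε, K₀ F y * (f (x - y) - f x)|
      ≤ discrepancyConst F V μ D B₁ B₂ * ε := by
  have hε₀ : 0 < ε := hε.1
  set A := discrepancySet m ε
  set R := Real.exp V * ε
  set M₁ := 6 / F ^ 2 / ε ^ 4 * (B₁ * R)
  set M₂ := 6 / F ^ 2 / ε ^ 4 * (2 * B₂ * R ^ 2)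
  set c := volume.real (ball (0 : E3) 1)
  have hB₁₀ : 0 ≤ B₁ := (norm_nonneg _).trans (hB₁ x)
  have hB₂₀ : 0 ≤ B₂ := (norm_nonneg _).trans (hB₂ x)
  have hA : MeasurableSet A := measurableSet_discrepancySet hm.measurable
  have hAR : A ⊆ ball 0 R := discrepancySet_subset_ball hmV
  have hAfin : volume A < ⊤ := (measure_mono hAR).trans_lt measure_ball_lt_top
  have hnorm : ∀ y ∈ A, ‖y‖ ≤ R := fun y hy ↦ (mem_ball_zero_iff.1 (hAR hy)).le
  have h₁ : ∀ y ∈ A, ‖K₀ F y * (f (x - y) - f x)‖ ≤ M₁ := fun y hy ↦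
    abs_K₀_mul_sub_le hF (hf.differentiable two_ne_zero) hB₁ x hε₀ hy.1 (hnorm y hy)
  have h₂ : ∀ y ∈ A ∩ -A,
      ‖K₀ F y * (f (x - y) - f x) + K₀ F (-y) * (f (x - -y) - f x)‖ ≤ M₂ := fun y hy ↦
    abs_K₀_mul_second_difference_le hF hf hB₂ x hε₀ hy.1.1 (hnorm y hy.1)
  have hφ : IntegrableOn (fun y ↦ K₀ F y * (f (x - y) - f x)) A volume :=
    .of_bound hAfin (measurable_K₀_mul_sub hf.continuous x).aestronglyMeasurable M₁
      (ae_restrict_of_forall_mem hA h₁)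
  have hsym := two_mul_norm_setIntegral_le hA hAfin hφ h₁ h₂
  have hS : volume.real (A ∩ -A) ≤ R ^ 3 * c :=
    (measureReal_mono inter_subset_left).trans (measureReal_discrepancySet_le hmV hε₀.le)
  have hAA := measureReal_discrepancySet_sdiff_neg_le hμ hD hm hmV hmD hε
  have hM₁ : 0 ≤ M₁ := by positivity
  have hM₂ : 0 ≤ M₂ := by positivity
  have hval : M₂ * (R ^ 3 * c) + 2 * (M₁ * (3 * (D * μ * Real.exp V ^ 2)
      * (1 + D * μ * Real.exp V ^ 2) ^ 2 * ε ^ 4 * c))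
      = 2 * (discrepancyConst F V μ D B₁ B₂ * ε) := by
    simp only [M₁, M₂, R, c, discrepancyConst]
    field_simp
  rw [Real.norm_eq_abs] at hsym
  linarith [mul_le_mul_of_nonneg_left hS hM₂, mul_le_mul_of_nonneg_left hAA hM₁]

theorem discrepancy_term_estimate_general
    (F : ℝ) (hF : F ∈ Set.Ioc (0 : ℝ) 1)
    (V μ D B₁ B₂ : ℝ)
    (hμ : 0 < μ) (hD : 0 ≤ D) (hB₁ : 0 ≤ B₁) (hB₂ : 0 ≤ B₂) :
    ∃ C > (0 : ℝ),
      ∀ m : EuclideanSpace ℝ (Fin 3) → EuclideanSpace ℝ (Fin 3),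
        Function.Bijective m →
        MeasurePreserving m (volume : Measure (EuclideanSpace ℝ (Fin 3))) volume →
        (∀ y : EuclideanSpace ℝ (Fin 3),
          (Real.exp (-V) * ‖y‖ ≤ ‖m y‖ ∧ ‖m y‖ ≤ Real.exp V * ‖y‖) ∧
          (Real.exp (-V) * ‖y‖ ≤ ‖m (-y)‖ ∧ ‖m (-y)‖ ≤ Real.exp V * ‖y‖)) →
        (∀ y : EuclideanSpace ℝ (Fin 3),
          |‖m (-y)‖ - ‖m y‖| ≤ D * min 1 (μ * ‖y‖) * ‖y‖) →
      ∀ f : EuclideanSpace ℝ (Fin 3) → ℝ,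
        ContDiff ℝ 2 f →
        (∀ x, ‖fderiv ℝ f x‖ ≤ B₁) →
        (∀ x, ‖iteratedFDeriv ℝ 2 f x‖ ≤ B₂) →
      ∀ x : EuclideanSpace ℝ (Fin 3),
        (∀ ε ∈ Set.Ioc (0 : ℝ) 1,
          |∫ y in {y : EuclideanSpace ℝ (Fin 3) | ε ≤ ‖y‖ ∧ ‖m (-y)‖ < ε},
              K₀ F y * (f (x - y) - f x)| ≤ C * ε) ∧
        Tendsto (fun ε : ℝ =>
            ∫ y in {y : EuclideanSpace ℝ (Fin 3) | ε ≤ ‖y‖ ∧ ‖m (-y)‖ < ε},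
              K₀ F y * (f (x - y) - f x))
          (𝓝[>] 0) (𝓝 0) := by
  set C := discrepancyConst F V μ D B₁ B₂
  have hC : 0 ≤ C := by unfold C discrepancyConst; positivity
  refine ⟨C + 1, by positivity, fun m _ hm hmV hmD f hf hB₁f hB₂f x ↦ ?_⟩
  have hbound : ∀ ε ∈ Ioc (0 : ℝ) 1,
      |∫ y in discrepancySet m ε, K₀ F y * (f (x - y) - f x)| ≤ (C + 1) * ε := fun ε hε ↦
    (abs_setIntegral_discrepancySet_le hF hμ.le hD hm (fun y ↦ (hmV y).2.1) hmD hf hB₁f hB₂f x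
      hε).trans (by linarith [hε.1])
  have hlim : Tendsto (fun ε : ℝ ↦ (C + 1) * ε) (𝓝[>] 0) (𝓝 0) :=
    ((continuous_const_mul _).tendsto' 0 0 (mul_zero _)).mono_left nhdsWithin_le_nhds
  refine ⟨hbound, squeeze_zero_norm' ?_ hlim⟩
  filter_upwards [Ioc_mem_nhdsGT zero_lt_one] with ε hε
  exact hbound ε hε

/-- The discrepancy term
`g_ε = ∫_{{|y| ≥ ε, |m(−y)| < ε}} K₀(y)(f(x−y) − f(x)) dy` satisfies `|g_ε| ≤ C ε` for
`0 < ε ≤ 1`, with `C` depending only on `F`, `V`, `D`, `μ` and the bounds `B₁, B₂` on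
`‖∇f‖_{L^∞}, ‖∇²f‖_{L^∞}`; in particular `g_ε → 0` as `ε → 0⁺`, uniformly in `x`. -/
theorem discrepancy_term_estimate
    (F : ℝ) (hF : F ∈ Set.Ioc (0 : ℝ) 1)
    (V μ D B₁ B₂ : ℝ) (hV : 0 ≤ V) (hV2 : Real.exp (2 * V) - 1 ≤ 1 / 2)
    (hμ : 0 < μ) (hD : 0 ≤ D) (hB₁ : 0 ≤ B₁) (hB₂ : 0 ≤ B₂) :
    ∃ C > (0 : ℝ),
      ∀ m : EuclideanSpace ℝ (Fin 3) → EuclideanSpace ℝ (Fin 3),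
        Function.Bijective m →
        MeasurePreserving m (volume : Measure (EuclideanSpace ℝ (Fin 3))) volume →
        (∀ y : EuclideanSpace ℝ (Fin 3),
          (Real.exp (-V) * ‖y‖ ≤ ‖m y‖ ∧ ‖m y‖ ≤ Real.exp V * ‖y‖) ∧
          (Real.exp (-V) * ‖y‖ ≤ ‖m (-y)‖ ∧ ‖m (-y)‖ ≤ Real.exp V * ‖y‖)) →
        (∀ y : EuclideanSpace ℝ (Fin 3),
          |‖m (-y)‖ - ‖m y‖| ≤ D * min 1 (μ * ‖y‖) * ‖y‖) →
      ∀ f : EuclideanSpace ℝ (Fin 3) → ℝ,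
        ContDiff ℝ 2 f →
        (∀ x, ‖fderiv ℝ f x‖ ≤ B₁) →
        (∀ x, ‖iteratedFDeriv ℝ 2 f x‖ ≤ B₂) →
      ∀ x : EuclideanSpace ℝ (Fin 3),
        (∀ ε ∈ Set.Ioc (0 : ℝ) 1,
          |∫ y in {y : EuclideanSpace ℝ (Fin 3) | ε ≤ ‖y‖ ∧ ‖m (-y)‖ < ε},
              K₀ F y * (f (x - y) - f x)| ≤ C * ε) ∧
        Tendsto (fun ε : ℝ =>
            ∫ y in {y : EuclideanSpace ℝ (Fin 3) | ε ≤ ‖y‖ ∧ ‖m (-y)‖ < ε},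
              K₀ F y * (f (x - y) - f x))
          (𝓝[>] 0) (𝓝 0) :=
  discrepancy_term_estimate_general F hF V μ D B₁ B₂ hμ hD hB₁ hB₂
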